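/- arXiv:1810.07567 — 2 statements merged into one kernel-verified Lean document; each statement's English description precedes it below -/
import Mathlib

section
/- Let μ, ν be probability measures on a Polish space M with μ ≪ ν. The Kullback–Leibler divergence satisfies the set-oriented formula D_KL(μ‖ν) = sup_{π ∈ Π} Σ_{A ∈ π} μ(A) log(μ(A)/ν(A)), where Π is the class of all finite measurable partitions of M, with the conventions 0·log(0/ν(A)) = 0 and μ(A) log(μ(A)/0) = +∞ when μ(A) > 0. -/
open MeasureTheory

/-- A finite measurable partition of the space. -/
def IsFinitePartition {M : Type*} [MeasurableSpace M] (π : Finset (Set M)) : Prop :=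
  (∀ A ∈ π, MeasurableSet A) ∧ (π : Set (Set M)).PairwiseDisjoint id ∧
    ⋃₀ (π : Set (Set M)) = Set.univ

namespace StmtAux

open Set Filter
open scoped ENNReal

lemma aux_sum_image {ι M : Type*} [DecidableEq ι] [DecidableEq (Set M)] (s : Finset ι) (S : ι → Set M)
    (hdisj : ∀ i ∈ s, ∀ j ∈ s, i ≠ j → Disjoint (S i) (S j))
    (t : Set M → ℝ) (ht : t ∅ = 0) :
    ∑ A ∈ s.image S, t A = ∑ k ∈ s, t (S k) := by
  induction s using Finset.induction_on with
  | empty => simp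
  | insert _ _ ha ih =>
    rename_i a s'
    rw [Finset.image_insert]
    rw [Finset.sum_insert ha]
    by_cases hmem : S a ∈ s'.image S
    · obtain ⟨b, hb, hba⟩ := Finset.mem_image.mp hmem
      have hSa : S a = ∅ := by
        have hne : a ≠ b := fun h => ha (h ▸ hb)
        have := hdisj a (Finset.mem_insert_self a s') b (Finset.mem_insert_of_mem hb) hne
        rw [hba] at this
        exact disjoint_self.mp (hba ▸ this)
      rw [Finset.insert_eq_self.mpr hmem]
      rw [ih (fun i hi j hj hij => hdisj i (Finset.mem_insert_of_mem hi) j (Finset.mem_insert_of_mem hj) hij)]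
      rw [hSa, ht, zero_add]
    · rw [Finset.sum_insert hmem,
        ih (fun i hi j hj hij => hdisj i (Finset.mem_insert_of_mem hi) j (Finset.mem_insert_of_mem hj) hij)]

lemma aux_entropy_ge {a : ℝ} (ha : 0 < a) : -2 * Real.sqrt a ≤ a * Real.log a := by
  have hsq : 0 < Real.sqrt a := Real.sqrt_pos.mpr ha
  have h1 : Real.log (1 / Real.sqrt a) ≤ 1 / Real.sqrt a - 1 :=
    Real.log_le_sub_one_of_pos (by positivity)
  rw [Real.log_div one_ne_zero hsq.ne', Real.log_one] at h1
  have h2 : 1 - 1 / Real.sqrt a ≤ Real.log (Real.sqrt a) := by linarith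
  have h3 : Real.log a = 2 * Real.log (Real.sqrt a) := by
    rw [Real.log_sqrt ha.le]; ring
  have h4 : a * Real.log a = 2 * a * Real.log (Real.sqrt a) := by rw [h3]; ring
  rw [h4]
  have h5 : 2 * a * (1 - 1 / Real.sqrt a) ≤ 2 * a * Real.log (Real.sqrt a) := by
    apply mul_le_mul_of_nonneg_left h2 (by positivity)
  refine le_trans ?_ h5
  have h6 : a / Real.sqrt a = Real.sqrt a := Real.div_sqrt
  have : 2 * a * (1 - 1 / Real.sqrt a) = 2 * a - 2 * (a / Real.sqrt a) := by ring
  rw [this, h6]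
  nlinarith [ha.le, hsq.le]

lemma aux_sqrt_exp (x : ℝ) : Real.sqrt (Real.exp x) = Real.exp (x / 2) := by
  rw [show Real.exp x = (Real.exp (x / 2)) ^ 2 by
    rw [sq, ← Real.exp_add]; ring_nf]
  exact Real.sqrt_sq (Real.exp_nonneg _)

lemma aux_inv_lintegral {α : Type*} [MeasurableSpace α] (μ ν : Measure α)
    [SigmaFinite μ] [SigmaFinite ν] (hμν : μ ≪ ν) {A : Set α} (hA : MeasurableSet A) :
    ∫⁻ x in A, (μ.rnDeriv ν x)⁻¹ ∂μ ≤ ν A := by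
  have h0 : μ.restrict A = (ν.restrict A).withDensity (μ.rnDeriv ν) := by
    rw [← restrict_withDensity hA, Measure.withDensity_rnDeriv_eq μ ν hμν]
  rw [h0, show (fun x => (μ.rnDeriv ν x)⁻¹) = (μ.rnDeriv ν)⁻¹ from rfl,
    lintegral_withDensity_eq_lintegral_mul _ (Measure.measurable_rnDeriv μ ν)
    (Measure.measurable_rnDeriv μ ν).inv]
  calc ∫⁻ x, (μ.rnDeriv ν * fun x => (μ.rnDeriv ν x)⁻¹) x ∂ν.restrict A
      ≤ ∫⁻ _x, 1 ∂ν.restrict A := lintegral_mono fun x => ENNReal.mul_inv_le_one _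
    _ = ν A := by rw [lintegral_one, Measure.restrict_apply_univ]

lemma aux_term_le {α : Type*} [MeasurableSpace α] (μ ν : Measure α)
    [IsFiniteMeasure μ] [IsFiniteMeasure ν] (hμν : μ ≪ ν)
    (hint : Integrable (fun x => Real.log ((μ.rnDeriv ν x).toReal)) μ)
    {A : Set α} (hA : MeasurableSet A) :
    (μ A).toReal * Real.log ((μ A).toReal / (ν A).toReal)
      ≤ ∫ x in A, Real.log ((μ.rnDeriv ν x).toReal) ∂μ := by
  set f := μ.rnDeriv ν with hf
  set g : α → ℝ := fun x => (f x).toReal with hg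
  by_cases hμA : μ A = 0
  · rw [Measure.restrict_eq_zero.mpr hμA, integral_zero_measure, hμA]
    simp
  · have hνA : ν A ≠ 0 := fun h => hμA (hμν h)
    set a : ℝ := (μ A).toReal with haa
    set b : ℝ := (ν A).toReal with hbb
    have ha : 0 < a := ENNReal.toReal_pos hμA (measure_ne_top _ _)
    have hb : 0 < b := ENNReal.toReal_pos hνA (measure_ne_top _ _)
    set c : ℝ := a / b with hcc
    have hc : 0 < c := div_pos ha hb
    -- a.e. facts
    have hpos : ∀ᵐ x ∂μ, 0 < f x := Measure.rnDeriv_pos hμν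
    have hlt : ∀ᵐ x ∂μ, f x < ∞ := hμν.ae_le (Measure.rnDeriv_lt_top μ ν)
    have hgmeas : Measurable g := (Measure.measurable_rnDeriv μ ν).ennreal_toReal
    -- the inverse function
    set w : α → ℝ := fun x => (g x)⁻¹ with hw
    have hwmeas : Measurable w := hgmeas.inv
    have hwnn : ∀ x, 0 ≤ w x := fun x => inv_nonneg.mpr ENNReal.toReal_nonneg
    have hae_ofReal : ∀ᵐ x ∂μ, ENNReal.ofReal (w x) = (f x)⁻¹ := by
      filter_upwards [hpos, hlt] with x hx1 hx2
      rw [hw]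
      simp only
      rw [← ENNReal.toReal_inv, ENNReal.ofReal_toReal]
      exact ENNReal.inv_ne_top.mpr hx1.ne'
    have hlint : ∫⁻ x in A, ENNReal.ofReal (w x) ∂μ ≤ ν A := by
      calc ∫⁻ x in A, ENNReal.ofReal (w x) ∂μ = ∫⁻ x in A, (f x)⁻¹ ∂μ :=
            lintegral_congr_ae (ae_restrict_of_ae hae_ofReal)
        _ ≤ ν A := aux_inv_lintegral μ ν hμν hA
    have hwint : IntegrableOn w A μ := by
      refine ⟨(hwmeas.aestronglyMeasurable).restrict, ?_⟩
      rw [hasFiniteIntegral_iff_ofReal (Filter.Eventually.of_forall hwnn)]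
      exact lt_of_le_of_lt hlint (measure_lt_top _ _)
    have hwval : ∫ x in A, w x ∂μ ≤ b := by
      rw [integral_eq_lintegral_of_nonneg_ae (Filter.Eventually.of_forall hwnn)
        (hwmeas.aestronglyMeasurable).restrict]
      rw [hbb]
      exact ENNReal.toReal_mono (measure_ne_top _ _) hlint
    -- pointwise inequality
    have hptwise : ∀ᵐ x ∂μ.restrict A, Real.log c + (1 - c * w x) ≤ Real.log (g x) := by
      filter_upwards [ae_restrict_of_ae hpos, ae_restrict_of_ae hlt] with x hx1 hx2
      have hgx : 0 < g x := ENNReal.toReal_pos hx1.ne' hx2.ne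
      have h1 : Real.log (c / g x) ≤ c / g x - 1 := Real.log_le_sub_one_of_pos (by positivity)
      rw [Real.log_div hc.ne' hgx.ne'] at h1
      have : c / g x = c * w x := by rw [hw]; ring
      rw [this] at h1
      linarith
    -- integrate
    have hintA : IntegrableOn (fun x => Real.log (g x)) A μ := hint.integrableOn
    have hlhsint : IntegrableOn (fun x => Real.log c + (1 - c * w x)) A μ := by
      apply Integrable.add (integrableOn_const (measure_ne_top _ _))
      exact Integrable.sub (integrableOn_const (measure_ne_top _ _))
        (hwint.const_mul c)
    have hmono : ∫ x in A, (Real.log c + (1 - c * w x)) ∂μ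
        ≤ ∫ x in A, Real.log (g x) ∂μ := integral_mono_ae hlhsint hintA hptwise
    have hc1 : Integrable (fun _ : α => Real.log c) (μ.restrict A) :=
      integrableOn_const (measure_ne_top _ _)
    have hc2 : Integrable (fun _ : α => (1 : ℝ)) (μ.restrict A) :=
      integrableOn_const (measure_ne_top _ _)
    have hc3 : Integrable (fun x => c * w x) (μ.restrict A) := hwint.const_mul c
    have hc4 : Integrable (fun x => 1 - c * w x) (μ.restrict A) := hc2.sub hc3
    have hsplit : ∫ x in A, (Real.log c + (1 - c * w x)) ∂μ
        = a * Real.log c + (a - c * ∫ x in A, w x ∂μ) := by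
      rw [integral_add hc1 hc4, integral_sub hc2 hc3]
      rw [integral_const, integral_const, MeasureTheory.integral_const_mul]
      simp [Measure.restrict_apply_univ, smul_eq_mul, haa, measureReal_def]
    have hfinal : a * Real.log c ≤ ∫ x in A, (Real.log c + (1 - c * w x)) ∂μ := by
      rw [hsplit]
      have : c * ∫ x in A, w x ∂μ ≤ c * b := mul_le_mul_of_nonneg_left hwval hc.le
      have hcb : c * b = a := by rw [hcc]; field_simp
      nlinarith
    calc a * Real.log (a / b) = a * Real.log c := by rw [hcc]
      _ ≤ ∫ x in A, (Real.log c + (1 - c * w x)) ∂μ := hfinal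
      _ ≤ ∫ x in A, Real.log (g x) ∂μ := hmono

lemma aux_sum_le {M : Type*} [MeasurableSpace M] (μ ν : Measure M)
    [IsFiniteMeasure μ] [IsFiniteMeasure ν] (hμν : μ ≪ ν)
    (hint : Integrable (fun x => Real.log ((μ.rnDeriv ν x).toReal)) μ)
    {π : Finset (Set M)} (hπ : IsFinitePartition π) :
    ∑ A ∈ π, (μ A).toReal * Real.log ((μ A).toReal / (ν A).toReal)
      ≤ ∫ x, Real.log ((μ.rnDeriv ν x).toReal) ∂μ := by
  obtain ⟨hmeas, hdisj, hcover⟩ := hπ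
  have hsum : ∑ A ∈ π, ∫ x in A, Real.log ((μ.rnDeriv ν x).toReal) ∂μ
      = ∫ x, Real.log ((μ.rnDeriv ν x).toReal) ∂μ := by
    rw [← integral_biUnion_finset π hmeas hdisj (fun A _ => hint.integrableOn)]
    have hU : (⋃ A ∈ π, A) = Set.univ := by
      rw [← hcover, Set.sUnion_eq_biUnion]; rfl
    rw [hU]
    simp [Measure.restrict_univ]
  rw [← hsum]
  exact Finset.sum_le_sum fun A hA => aux_term_le μ ν hμν hint (hmeas A hA)

set_option maxHeartbeats 2000000 in
lemma aux_exists_partition {M : Type*} [MeasurableSpace M] (μ ν : Measure M)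
    [IsProbabilityMeasure μ] [IsProbabilityMeasure ν] (hμν : μ ≪ ν)
    (hint : Integrable (fun x => Real.log ((μ.rnDeriv ν x).toReal)) μ)
    {ε : ℝ} (hε : 0 < ε) :
    ∃ P : Finset (Set M), IsFinitePartition P ∧
      ∫ x, Real.log ((μ.rnDeriv ν x).toReal) ∂μ - ε
        ≤ ∑ A ∈ P, (μ A).toReal * Real.log ((μ A).toReal / (ν A).toReal) := by
  classical
  set f := μ.rnDeriv ν with hf
  set g : M → ℝ := fun x => (f x).toReal with hg
  set L : M → ℝ := fun x => Real.log (g x) with hL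
  have hfmeas : Measurable f := Measure.measurable_rnDeriv μ ν
  have hgmeas : Measurable g := hfmeas.ennreal_toReal
  have hLmeas : Measurable L := hgmeas.log
  have hpos : ∀ᵐ x ∂μ, 0 < f x := Measure.rnDeriv_pos hμν
  have hlt : ∀ᵐ x ∂μ, f x < ∞ := hμν.ae_le (Measure.rnDeriv_lt_top μ ν)
  set δ : ℝ := ε / 4 with hδ
  have hδpos : 0 < δ := by positivity
  -- choose N
  obtain ⟨N, hN1, hN2, hN3⟩ : ∃ N : ℕ, (∫ x in {y | (N : ℝ) ≤ L y}, L x ∂μ) < ε / 4 ∧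
      2 * Real.exp (-(N : ℝ) / 2) < ε / 4 ∧ 1 ≤ N := by
    have htail : Tendsto (fun m : ℕ => ∫ x in {y | (m : ℝ) ≤ L y}, L x ∂μ)
        atTop (nhds 0) := by
      apply hint.tendsto_setIntegral_nhds_zero
      have h0 : Tendsto (fun m : ℕ => μ {y | (m : ℝ) ≤ L y}) atTop
          (nhds (μ (⋂ m : ℕ, {y | (m : ℝ) ≤ L y}))) := by
        apply tendsto_measure_iInter_atTop
        · intro m
          exact (hLmeas measurableSet_Ici).nullMeasurableSet
        · intro i j hij x hx
          have hij' : (i : ℝ) ≤ (j : ℝ) := by exact_mod_cast hij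
          exact le_trans hij' hx
        · exact ⟨0, measure_ne_top _ _⟩
      have hempty : (⋂ m : ℕ, {y : M | (m : ℝ) ≤ L y}) = ∅ := by
        ext x
        simp only [Set.mem_iInter, Set.mem_setOf_eq, Set.mem_empty_iff_false, iff_false]
        push_neg
        obtain ⟨m, hm⟩ := exists_nat_gt (L x)
        exact ⟨m, hm⟩
      rw [hempty, measure_empty] at h0
      exact h0
    have hexp : Tendsto (fun m : ℕ => 2 * Real.exp (-(m : ℝ) / 2)) atTop (nhds 0) := by
      have h1 : Tendsto (fun m : ℕ => (Real.exp (-1 / 2)) ^ m) atTop (nhds 0) :=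
        tendsto_pow_atTop_nhds_zero_of_lt_one (Real.exp_nonneg _)
          (Real.exp_lt_one_iff.mpr (by norm_num))
      have h2 : (fun m : ℕ => 2 * Real.exp (-(m : ℝ) / 2))
          = fun m : ℕ => 2 * (Real.exp (-1 / 2)) ^ m := by
        funext m
        rw [← Real.exp_nat_mul]
        ring_nf
      rw [h2]
      simpa using h1.const_mul 2
    have e1 := htail.eventually_lt_const (show (0 : ℝ) < ε / 4 by positivity)
    have e2 := hexp.eventually_lt_const (show (0 : ℝ) < ε / 4 by positivity)
    have e3 : ∀ᶠ m : ℕ in atTop, 1 ≤ m := Filter.eventually_ge_atTop 1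
    obtain ⟨N, h1, h2, h3⟩ := ((e1.and (e2.and e3))).exists
    exact ⟨N, h1, h2, h3⟩
  -- choose n
  set n : ℕ := max 1 ⌈(N : ℝ) / δ⌉₊ with hn
  have hn1 : 1 ≤ n := le_max_left _ _
  have hnδ : (N : ℝ) ≤ (n : ℝ) * δ := by
    have h1 : (N : ℝ) / δ ≤ (⌈(N : ℝ) / δ⌉₊ : ℝ) := Nat.le_ceil _
    have h2 : (⌈(N : ℝ) / δ⌉₊ : ℝ) ≤ (n : ℝ) := by exact_mod_cast Nat.le_max_right 1 _
    rw [div_le_iff₀ hδpos] at h1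
    nlinarith
  have hnδ0 : 0 ≤ (n : ℝ) * δ := by positivity
  -- the partition pieces
  set B : ℤ → ℝ := fun k => Real.exp ((k : ℝ) * δ) with hB
  have hBpos : ∀ k, 0 < B k := fun k => Real.exp_pos _
  have hBmono : Monotone B := fun j k hjk => Real.exp_le_exp.mpr
    (mul_le_mul_of_nonneg_right (by exact_mod_cast hjk) hδpos.le)
  set s : Finset ℤ := Finset.Icc (-(n : ℤ) - 1) n with hs
  set J : ℤ → Set ℝ := fun k =>
    if k = (n : ℤ) then Set.Ici (B n)
    else if k = -(n : ℤ) - 1 then Set.Iio (B (-(n : ℤ)))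
    else Set.Ico (B k) (B (k + 1)) with hJ
  set S : ℤ → Set M := fun k => g ⁻¹' (J k) with hS
  have hJmeas : ∀ k, MeasurableSet (J k) := by
    intro k
    rw [hJ]
    dsimp only
    split_ifs
    exacts [measurableSet_Ici, measurableSet_Iio, measurableSet_Ico]
  have hSmeas : ∀ k, MeasurableSet (S k) := fun k => hgmeas (hJmeas k)
  have hJlower : ∀ k, k ≠ -(n : ℤ) - 1 → ∀ x ∈ J k, B k ≤ x := by
    intro k hk x hx
    rw [hJ] at hx
    dsimp only at hx
    by_cases h1 : k = (n : ℤ)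
    · rw [if_pos h1] at hx; rw [h1]; exact hx
    · rw [if_neg h1, if_neg hk] at hx; exact hx.1
  have hJupper : ∀ k, k ≠ (n : ℤ) → ∀ x ∈ J k, x < B (k + 1) := by
    intro k hk x hx
    rw [hJ] at hx
    dsimp only at hx
    by_cases h2 : k = -(n : ℤ) - 1
    · rw [if_neg hk, if_pos h2] at hx
      have hkn : k + 1 = -(n : ℤ) := by omega
      rw [hkn]
      exact hx
    · rw [if_neg hk, if_neg h2] at hx
      exact hx.2
  have hSdisj : ∀ j ∈ s, ∀ k ∈ s, j ≠ k → Disjoint (S j) (S k) := by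
    have hJd : ∀ j k : ℤ, j ∈ s → k ∈ s → j < k → Disjoint (J j) (J k) := by
      intro j k hjs hks hjk
      rw [Finset.mem_Icc] at hjs hks
      rw [Set.disjoint_left]
      intro x hxj hxk
      have hju := hJupper j (by omega) x hxj
      have hkl := hJlower k (by omega) x hxk
      have : B (j + 1) ≤ B k := hBmono (by omega)
      linarith
    intro j hj k hk hne
    rcases lt_or_gt_of_ne hne with h | h
    · exact Disjoint.preimage g (hJd j k hj hk h)
    · exact (Disjoint.preimage g (hJd k j hk hj h)).symm
  have hScover : ∀ x : M, ∃ k ∈ s, x ∈ S k := by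
    intro x
    rcases lt_or_ge (g x) (B (-(n : ℤ))) with hb | hb
    · refine ⟨-(n : ℤ) - 1, Finset.mem_Icc.mpr ⟨le_refl _, by omega⟩, ?_⟩
      show g x ∈ J _
      rw [hJ]
      dsimp only
      rw [if_neg (by omega), if_pos rfl]
      exact hb
    rcases le_or_gt (B (n : ℤ)) (g x) with ht | ht
    · refine ⟨(n : ℤ), Finset.mem_Icc.mpr ⟨by omega, le_refl _⟩, ?_⟩
      show g x ∈ J _
      rw [hJ]
      dsimp only
      rw [if_pos rfl]
      exact ht
    · have hgpos : 0 < g x := lt_of_lt_of_le (hBpos _) hb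
      set y := Real.log (g x) with hy
      have hy1 : ((-(n : ℤ) : ℤ) : ℝ) * δ ≤ y := by
        have h := Real.log_le_log (hBpos (-(n : ℤ))) hb
        rwa [hB, Real.log_exp] at h
      have hy2 : y < (((n : ℤ) : ℤ) : ℝ) * δ := by
        have h := Real.log_lt_log hgpos ht
        rwa [hB, Real.log_exp] at h
      set k : ℤ := ⌊y / δ⌋ with hk
      have hk1 : -(n : ℤ) ≤ k := by
        apply Int.le_floor.mpr
        rw [le_div_iff₀ hδpos]
        push_cast
        push_cast at hy1
        linarith
      have hk2 : k < (n : ℤ) := by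
        apply Int.floor_lt.mpr
        rw [div_lt_iff₀ hδpos]
        push_cast
        push_cast at hy2
        linarith
      refine ⟨k, Finset.mem_Icc.mpr ⟨by omega, by omega⟩, ?_⟩
      show g x ∈ J k
      rw [hJ]
      dsimp only
      rw [if_neg (by omega), if_neg (by omega)]
      constructor
      · have h1 : (k : ℝ) ≤ y / δ := Int.floor_le _
        have h2 : (k : ℝ) * δ ≤ y := by
          rw [← le_div_iff₀ hδpos]; exact h1
        calc B k = Real.exp ((k : ℝ) * δ) := rfl
          _ ≤ Real.exp y := Real.exp_le_exp.mpr h2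
          _ = g x := Real.exp_log hgpos
      · have h1 : y / δ < (k : ℝ) + 1 := Int.lt_floor_add_one _
        have h2 : y < ((k : ℝ) + 1) * δ := by
          rw [← div_lt_iff₀ hδpos]; exact h1
        calc g x = Real.exp y := (Real.exp_log hgpos).symm
          _ < Real.exp (((k : ℝ) + 1) * δ) := Real.exp_lt_exp.mpr h2
          _ = B (k + 1) := by rw [hB]; push_cast; ring_nf
  -- μ (S k) in terms of ν
  have hmuS : ∀ k, μ (S k) = ∫⁻ x in S k, f x ∂ν :=
    fun k => (Measure.setLIntegral_rnDeriv' hμν (hSmeas k)).symm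
  -- lower bound on partition term for k ≠ bottom
  have hkey_low : ∀ k : ℤ, k ≠ -(n : ℤ) - 1 →
      ((k : ℝ) * δ) * (μ (S k)).toReal
        ≤ (μ (S k)).toReal * Real.log ((μ (S k)).toReal / (ν (S k)).toReal) := by
    intro k hk
    by_cases hμ0 : μ (S k) = 0
    · simp [hμ0]
    · have hν0 : ν (S k) ≠ 0 := fun h => hμ0 (hμν h)
      have ha : 0 < (μ (S k)).toReal := ENNReal.toReal_pos hμ0 (measure_ne_top _ _)
      have hb : 0 < (ν (S k)).toReal := ENNReal.toReal_pos hν0 (measure_ne_top _ _)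
      have hge : ENNReal.ofReal (B k) * ν (S k) ≤ μ (S k) := by
        rw [hmuS k]
        calc ENNReal.ofReal (B k) * ν (S k)
            = ∫⁻ _x in S k, ENNReal.ofReal (B k) ∂ν := (setLIntegral_const _ _).symm
          _ ≤ ∫⁻ x in S k, f x ∂ν := by
              apply setLIntegral_mono hfmeas
              intro x hx
              rcases eq_or_ne (f x) ∞ with htop | htop
              · rw [htop]; exact le_top
              · have h1 : B k ≤ g x := hJlower k hk (g x) hx
                calc ENNReal.ofReal (B k) ≤ ENNReal.ofReal (g x) :=
                      ENNReal.ofReal_le_ofReal h1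
                  _ = f x := ENNReal.ofReal_toReal htop
      have hba : B k * (ν (S k)).toReal ≤ (μ (S k)).toReal := by
        have h2 := ENNReal.toReal_mono (measure_ne_top μ _) hge
        rwa [ENNReal.toReal_mul, ENNReal.toReal_ofReal (hBpos k).le] at h2
      have hlog : (k : ℝ) * δ ≤ Real.log ((μ (S k)).toReal / (ν (S k)).toReal) := by
        have h1 : B k ≤ (μ (S k)).toReal / (ν (S k)).toReal :=
          (le_div_iff₀ hb).mpr (by linarith)
        calc (k : ℝ) * δ = Real.log (B k) := (Real.log_exp _).symm
          _ ≤ Real.log _ := Real.log_le_log (hBpos k) h1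
      nlinarith
  -- integrability on pieces
  have hbotmem : ∀ x : M, x ∈ S (-(n : ℤ) - 1) → g x < B (-(n : ℤ)) := by
    intro x hx
    have h : g x ∈ J (-(n : ℤ) - 1) := hx
    rw [hJ] at h
    dsimp only at h
    rw [if_neg (by omega), if_pos rfl] at h
    exact h
  have hBneg : B (-(n : ℤ)) = Real.exp (-((n : ℝ) * δ)) := by
    rw [hB]
    dsimp only
    congr 1
    push_cast
    ring
  -- upper bound for middle pieces
  have hmid : ∀ k : ℤ, k ≠ (n : ℤ) → k ≠ -(n : ℤ) - 1 →
      ∫ x in S k, L x ∂μ ≤ ((k : ℝ) + 1) * δ * (μ (S k)).toReal := by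
    intro k hk1 hk2
    have hbound : ∀ x ∈ S k, L x ≤ ((k : ℝ) + 1) * δ := by
      intro x hx
      have h1 : B k ≤ g x := hJlower k hk2 (g x) hx
      have h2 : g x < B (k + 1) := hJupper k hk1 (g x) hx
      have hgpos : 0 < g x := lt_of_lt_of_le (hBpos k) h1
      calc L x = Real.log (g x) := rfl
        _ ≤ Real.log (B (k + 1)) := Real.log_le_log hgpos h2.le
        _ = ((k : ℝ) + 1) * δ := by
            rw [hB]; dsimp only; rw [Real.log_exp]; push_cast; ring
    calc ∫ x in S k, L x ∂μ ≤ ∫ _x in S k, ((k : ℝ) + 1) * δ ∂μ :=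
          setIntegral_mono_on hint.integrableOn
            (integrableOn_const (measure_ne_top _ _)) (hSmeas k) hbound
      _ = ((k : ℝ) + 1) * δ * (μ (S k)).toReal := by
          rw [setIntegral_const, smul_eq_mul, measureReal_def]; ring
  -- top piece integral bound
  have htop : ∫ x in S (n : ℤ), L x ∂μ ≤ ε / 4 := by
    have hsub : S (n : ℤ) ⊆ {y | (N : ℝ) ≤ L y} := by
      intro x hx
      have h1 : B (n : ℤ) ≤ g x := hJlower (n : ℤ) (by omega) (g x) hx
      have hgpos : 0 < g x := lt_of_lt_of_le (hBpos _) h1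
      have h2 : ((n : ℤ) : ℝ) * δ ≤ L x := by
        calc ((n : ℤ) : ℝ) * δ = Real.log (B (n : ℤ)) := (Real.log_exp _).symm
          _ ≤ Real.log (g x) := Real.log_le_log (hBpos _) h1
      show (N : ℝ) ≤ L x
      push_cast at h2
      linarith
    have hmono : ∫ x in S (n : ℤ), L x ∂μ ≤ ∫ x in {y | (N : ℝ) ≤ L y}, L x ∂μ := by
      apply setIntegral_mono_set hint.integrableOn
      · apply (ae_restrict_mem (hLmeas measurableSet_Ici)).mono
        intro x hx
        have hx' : (N : ℝ) ≤ L x := hx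
        have hN0 : (0 : ℝ) ≤ (N : ℝ) := by positivity
        show (0 : M → ℝ) x ≤ L x
        simp only [Pi.zero_apply]
        linarith
      · exact HasSubset.Subset.eventuallyLE hsub
    linarith [hN1]
  -- bottom piece
  have hbotμ : μ (S (-(n : ℤ) - 1)) ≤ ENNReal.ofReal (Real.exp (-((n : ℝ) * δ))) := by
    rw [hmuS]
    calc ∫⁻ x in S (-(n : ℤ) - 1), f x ∂ν
        ≤ ∫⁻ _x in S (-(n : ℤ) - 1), ENNReal.ofReal (Real.exp (-((n : ℝ) * δ))) ∂ν := by
          apply setLIntegral_mono_ae' (hSmeas _)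
          filter_upwards [Measure.rnDeriv_lt_top μ ν] with x hxlt hx
          calc f x = ENNReal.ofReal (g x) := (ENNReal.ofReal_toReal hxlt.ne).symm
            _ ≤ ENNReal.ofReal (Real.exp (-((n : ℝ) * δ))) := by
                apply ENNReal.ofReal_le_ofReal
                have := hbotmem x hx
                rw [hBneg] at this
                exact this.le
      _ = ENNReal.ofReal (Real.exp (-((n : ℝ) * δ))) * ν (S (-(n : ℤ) - 1)) :=
          setLIntegral_const _ _
      _ ≤ ENNReal.ofReal (Real.exp (-((n : ℝ) * δ))) * 1 :=
          mul_le_mul_right (prob_le_one (μ := ν)) _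
      _ = ENNReal.ofReal (Real.exp (-((n : ℝ) * δ))) := mul_one _
  have hbot : ∫ x in S (-(n : ℤ) - 1), L x ∂μ - δ * (μ (S (-(n : ℤ) - 1))).toReal - ε / 4
      ≤ (μ (S (-(n : ℤ) - 1))).toReal *
        Real.log ((μ (S (-(n : ℤ) - 1))).toReal / (ν (S (-(n : ℤ) - 1))).toReal) := by
    have ha0 : 0 ≤ (μ (S (-(n : ℤ) - 1))).toReal := ENNReal.toReal_nonneg
    have haN : (μ (S (-(n : ℤ) - 1))).toReal ≤ Real.exp (-((n : ℝ) * δ)) := by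
      have h := ENNReal.toReal_mono ENNReal.ofReal_ne_top hbotμ
      rwa [ENNReal.toReal_ofReal (Real.exp_nonneg _)] at h
    have hI : ∫ x in S (-(n : ℤ) - 1), L x ∂μ ≤ 0 := by
      apply integral_nonpos_of_ae
      filter_upwards [ae_restrict_mem (hSmeas _), ae_restrict_of_ae hpos,
        ae_restrict_of_ae hlt] with x hx hx1 hx2
      have hgpos : 0 < g x := ENNReal.toReal_pos hx1.ne' hx2.ne
      have h2 : g x < B (-(n : ℤ)) := hbotmem x hx
      have h4 : Real.exp (-((n : ℝ) * δ)) ≤ 1 := Real.exp_le_one_iff.mpr (by linarith)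
      have h3 : g x ≤ 1 := by rw [hBneg] at h2; linarith
      exact Real.log_nonpos hgpos.le h3
    have hterm : -(ε / 4) ≤ (μ (S (-(n : ℤ) - 1))).toReal *
        Real.log ((μ (S (-(n : ℤ) - 1))).toReal / (ν (S (-(n : ℤ) - 1))).toReal) := by
      rcases eq_or_lt_of_le ha0 with h0 | h0
      · rw [← h0, zero_mul]; linarith
      · have hμ0 : μ (S (-(n : ℤ) - 1)) ≠ 0 := by
          intro h
          rw [h] at h0
          simp at h0
        have hν0 : ν (S (-(n : ℤ) - 1)) ≠ 0 := fun h => hμ0 (hμν h)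
        have hb : 0 < (ν (S (-(n : ℤ) - 1))).toReal :=
          ENNReal.toReal_pos hν0 (measure_ne_top _ _)
        have hb1 : (ν (S (-(n : ℤ) - 1))).toReal ≤ 1 := by
          have h := ENNReal.toReal_mono (by norm_num : (1 : ℝ≥0∞) ≠ ⊤)
            (prob_le_one (μ := ν) (s := S (-(n : ℤ) - 1)))
          simpa using h
        have hlog1 : Real.log (μ (S (-(n : ℤ) - 1))).toReal
            ≤ Real.log ((μ (S (-(n : ℤ) - 1))).toReal / (ν (S (-(n : ℤ) - 1))).toReal) := by
          apply Real.log_le_log h0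
          rw [le_div_iff₀ hb]
          nlinarith
        have h5 := aux_entropy_ge h0
        have h6 : Real.sqrt (μ (S (-(n : ℤ) - 1))).toReal ≤ Real.exp (-((n : ℝ) * δ) / 2) := by
          rw [← aux_sqrt_exp]
          exact Real.sqrt_le_sqrt haN
        have h7 : Real.exp (-((n : ℝ) * δ) / 2) ≤ Real.exp (-(N : ℝ) / 2) :=
          Real.exp_le_exp.mpr (by linarith)
        have h8 : (μ (S (-(n : ℤ) - 1))).toReal * Real.log (μ (S (-(n : ℤ) - 1))).toReal
            ≤ (μ (S (-(n : ℤ) - 1))).toReal *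
              Real.log ((μ (S (-(n : ℤ) - 1))).toReal / (ν (S (-(n : ℤ) - 1))).toReal) :=
          mul_le_mul_of_nonneg_left hlog1 h0.le
        nlinarith [hN2]
    have hδa : 0 ≤ δ * (μ (S (-(n : ℤ) - 1))).toReal := mul_nonneg hδpos.le ha0
    linarith
  -- per-k uniform claim
  set t : Set M → ℝ := fun A => (μ A).toReal * Real.log ((μ A).toReal / (ν A).toReal) with ht
  have hmain : ∀ k ∈ s,
      ∫ x in S k, L x ∂μ - δ * (μ (S k)).toReal
        - ((if k = (n : ℤ) then ε / 4 else 0) + (if k = -(n : ℤ) - 1 then ε / 4 else 0))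
      ≤ t (S k) := by
    intro k _hks
    by_cases hk1 : k = (n : ℤ)
    · subst hk1
      rw [if_pos rfl, if_neg (by omega)]
      have h1 := hkey_low (n : ℤ) (by omega)
      have h2 : (0 : ℝ) ≤ ((n : ℤ) : ℝ) * δ * (μ (S (n : ℤ))).toReal := by
        have hn0 : (0 : ℝ) ≤ ((n : ℤ) : ℝ) := by push_cast; positivity
        have := ENNReal.toReal_nonneg (a := μ (S (n : ℤ)))
        positivity
      have hδa : 0 ≤ δ * (μ (S (n : ℤ))).toReal :=
        mul_nonneg hδpos.le ENNReal.toReal_nonneg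
      rw [ht]
      dsimp only
      linarith [htop]
    · by_cases hk2 : k = -(n : ℤ) - 1
      · subst hk2
        rw [if_neg hk1, if_pos rfl]
        rw [ht]
        dsimp only
        linarith [hbot]
      · rw [if_neg hk1, if_neg hk2]
        have h1 := hkey_low k hk2
        have h2 := hmid k hk1 hk2
        rw [ht]
        dsimp only
        have h3 : ((k : ℝ) + 1) * δ * (μ (S k)).toReal
            = (k : ℝ) * δ * (μ (S k)).toReal + δ * (μ (S k)).toReal := by ring
        linarith
  -- sum facts
  have hpair : Set.Pairwise (↑s) (Function.onFun Disjoint S) := by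
    intro j hj k hk hne
    exact hSdisj j hj k hk hne
  have hUnion : (⋃ k ∈ s, S k) = Set.univ := by
    apply Set.eq_univ_of_forall
    intro x
    obtain ⟨k, hk, hxk⟩ := hScover x
    exact Set.mem_biUnion hk hxk
  have hsum1 : ∑ k ∈ s, ∫ x in S k, L x ∂μ = ∫ x, L x ∂μ := by
    rw [← integral_biUnion_finset s (fun k _ => hSmeas k) hpair
      (fun k _ => hint.integrableOn)]
    rw [hUnion, Measure.restrict_univ]
  have hsum2 : ∑ k ∈ s, (μ (S k)).toReal = 1 := by
    rw [← ENNReal.toReal_sum (fun k _ => measure_ne_top μ _)]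
    rw [← measure_biUnion_finset hpair (fun k _ => hSmeas k)]
    rw [hUnion, measure_univ, ENNReal.toReal_one]
  have hsum3 : ∑ k ∈ s, ((if k = (n : ℤ) then ε / 4 else 0)
      + (if k = -(n : ℤ) - 1 then ε / 4 else 0)) ≤ ε / 2 := by
    rw [Finset.sum_add_distrib, Finset.sum_ite_eq' s, Finset.sum_ite_eq' s]
    split_ifs <;> linarith
  -- build the partition
  refine ⟨s.image S, ⟨?_, ?_, ?_⟩, ?_⟩
  · intro A hA
    obtain ⟨k, _, rfl⟩ := Finset.mem_image.mp hA
    exact hSmeas k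
  · intro A hA A' hA' hne
    rw [Finset.coe_image] at hA hA'
    obtain ⟨j, hj, rfl⟩ := hA
    obtain ⟨k, hk, rfl⟩ := hA'
    have hjk : j ≠ k := fun h => hne (by rw [h])
    exact hSdisj j hj k hk hjk
  · apply Set.eq_univ_of_forall
    intro x
    rw [Set.mem_sUnion]
    obtain ⟨k, hk, hxk⟩ := hScover x
    exact ⟨S k, Finset.mem_coe.mpr (Finset.mem_image_of_mem S hk), hxk⟩
  · have heq : ∑ A ∈ s.image S, t A = ∑ k ∈ s, t (S k) :=
      aux_sum_image s S hSdisj t (by rw [ht]; simp)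
    have hle := Finset.sum_le_sum hmain
    rw [Finset.sum_sub_distrib, Finset.sum_sub_distrib, ← Finset.mul_sum, hsum1, hsum2] at hle
    show ∫ x, L x ∂μ - ε ≤ ∑ A ∈ s.image S, t A
    rw [heq]
    rw [hδ] at hle
    linarith

end StmtAux

open StmtAux in
/-- Set-oriented representation of the Kullback–Leibler divergence on a Polish space:
D_KL(μ‖ν) = sup over finite measurable partitions of Σ_A μ(A) log(μ(A)/ν(A)). -/
theorem stmt4 {M : Type*} [TopologicalSpace M] [PolishSpace M] [MeasurableSpace M] [BorelSpace M]
    (μ ν : Measure M) [IsProbabilityMeasure μ] [IsProbabilityMeasure ν] (hμν : μ ≪ ν)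
    (hint : Integrable (fun x => Real.log ((μ.rnDeriv ν x).toReal)) μ) :
    ∫ x, Real.log ((μ.rnDeriv ν x).toReal) ∂μ =
      ⨆ π : {π : Finset (Set M) // IsFinitePartition π},
        ∑ A ∈ π.1, (μ A).toReal * Real.log ((μ A).toReal / (ν A).toReal) := by
  have hne : Nonempty {π : Finset (Set M) // IsFinitePartition π} := by
    refine ⟨⟨{Set.univ}, ?_, ?_, ?_⟩⟩
    · intro A hA
      rw [Finset.mem_singleton] at hA
      subst hA
      exact MeasurableSet.univ
    · simp
    · simp
  have hub : ∀ π : {π : Finset (Set M) // IsFinitePartition π},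
      ∑ A ∈ π.1, (μ A).toReal * Real.log ((μ A).toReal / (ν A).toReal)
        ≤ ∫ x, Real.log ((μ.rnDeriv ν x).toReal) ∂μ :=
    fun π => aux_sum_le μ ν hμν hint π.2
  have hbdd : BddAbove (Set.range fun π : {π : Finset (Set M) // IsFinitePartition π} =>
      ∑ A ∈ π.1, (μ A).toReal * Real.log ((μ A).toReal / (ν A).toReal)) := by
    refine ⟨∫ x, Real.log ((μ.rnDeriv ν x).toReal) ∂μ, ?_⟩
    rintro r ⟨π, rfl⟩
    exact hub π
  apply le_antisymm
  · apply le_of_forall_pos_le_add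
    intro ε hε
    obtain ⟨P, hP, hPle⟩ := aux_exists_partition μ ν hμν hint hε
    have h1 := le_ciSup hbdd (⟨P, hP⟩ : {π : Finset (Set M) // IsFinitePartition π})
    simp only at h1
    linarith
  · exact ciSup_le hub
end

section
/- Let μ_{t_0}, μ_t be probability measures on ℝ^d with μ_t obtained as the mean of random pushforward measures: μ_t(dx) = ρ_{t_0}(x) E[π_{t,t_0}(x,ω)] dx, where for each ω, π_{t,t_0}(·,ω) is the density of the pushforward of μ_{t_0} under a diffeomorphism φ_{t,t_0}(·,ω), and α_{t,t_0}(·,ω) is the density of the corresponding pullback measure. If φ : (0,∞) → [0,∞) is convex with φ(1)=0, and φ_‡(z) := z φ(1/z), then D_φ(μ_t‖μ_{t_0}) ≤ ∫_{ℝ^d} E[ φ_‡(α_{t,t_0}(x,ω)) ] μ_{t_0}(dx). -/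
/-!
For fixed `x`, Jensen's inequality in `ω` gives `φ (E π(x,·)) ≤ E φ(π(x,·))`. After integrating
in `x` and exchanging the integrals, the inner integral `∫ φ (π(x,ω)) dμ0(x)` is transformed by
the substitution `y = Finv ω x`: it sends `μ0` to `α(·,ω) μ0` and `π(x,ω)⁻¹ = α(y,ω)`, so it equals
`∫ α(y,ω) φ(α(y,ω)⁻¹) dμ0(y) = ∫ φ_‡(α(y,ω)) dμ0(y)`. The same substitution applied to `‖π‖`
shows `∫∫ π = 1`, which supplies the integrability that Jensen's inequality needs.
-/

open MeasureTheory Set Function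
open scoped ENNReal

section Measurability

variable {X Y Z : Type*} [MeasurableSpace X] {μ : Measure X}

theorem ContinuousOn.comp_aemeasurable_of_ae_mem [TopologicalSpace Y] [MeasurableSpace Y]
    [OpensMeasurableSpace Y] [TopologicalSpace Z] [MeasurableSpace Z] [BorelSpace Z]
    {g : Y → Z} {s : Set Y} (hg : ContinuousOn g s) (hs : MeasurableSet s) {f : X → Y}
    (hf : AEMeasurable f μ) (hfs : ∀ᵐ x ∂μ, f x ∈ s) : AEMeasurable (fun x => g (f x)) μ := by
  have hrestrict : (μ.map f).restrict s = μ.map f :=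
    Measure.restrict_eq_self_of_ae_mem ((ae_map_iff hf hs).2 hfs)
  exact (hrestrict ▸ hg.aemeasurable hs).comp_aemeasurable hf

theorem integral_pos_of_forall_pos [NeZero μ] {f : X → ℝ} (hf : Integrable f μ)
    (hpos : ∀ x, 0 < f x) : 0 < ∫ x, f x ∂μ := by
  rw [integral_pos_iff_support_of_nonneg (fun x => (hpos x).le) hf,
    support_eq_univ fun x => (hpos x).ne', Measure.measure_univ_pos]
  exact NeZero.ne μ

end Measurability

namespace ConvexOn

variable {s : Set ℝ} {g : ℝ → ℝ}

theorem add_rightDeriv_mul_sub_le (hg : ConvexOn ℝ s g) {x y : ℝ} (hx : x ∈ interior s)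
    (hy : y ∈ s) : g x + derivWithin g (Ioi x) x * (y - x) ≤ g y := by
  rcases lt_trichotomy y x with hyx | rfl | hxy
  · have hslope := (hg.slope_le_leftDeriv_of_mem_interior hy hx hyx).trans
      (hg.leftDeriv_le_rightDeriv_of_mem_interior hx)
    rw [slope_def_field, div_le_iff₀ (sub_pos.2 hyx)] at hslope
    nlinarith
  · simp
  · have hslope := hg.rightDeriv_le_slope_of_mem_interior hx hy hxy
    rw [slope_def_field, le_div_iff₀ (sub_pos.2 hxy)] at hslope
    nlinarith

variable {X : Type*} [MeasurableSpace X] {μ : Measure X} [IsProbabilityMeasure μ] {f : X → ℝ}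

theorem map_integral_le_of_mem_interior (hg : ConvexOn ℝ s g) (hfs : ∀ᵐ a ∂μ, f a ∈ s)
    (hfi : Integrable f μ) (hgf : Integrable (fun a => g (f a)) μ)
    (hm : ∫ a, f a ∂μ ∈ interior s) : g (∫ a, f a ∂μ) ≤ ∫ a, g (f a) ∂μ := by
  set m := ∫ a, f a ∂μ
  set c := derivWithin g (Ioi m) m
  have hdev : Integrable (fun a => c * (f a - m)) μ :=
    (hfi.sub (integrable_const m)).const_mul c
  have hline : Integrable (fun a => g m + c * (f a - m)) μ := (integrable_const _).add hdev
  calc g m = ∫ a, g m + c * (f a - m) ∂μ := by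
        rw [integral_add (integrable_const _) hdev, integral_const_mul,
          integral_sub hfi (integrable_const m)]
        simp [m]
    _ ≤ ∫ a, g (f a) ∂μ := integral_mono_ae hline hgf <|
        hfs.mono fun a ha => hg.add_rightDeriv_mul_sub_le hm ha

theorem ofReal_map_integral_le_lintegral (hg : ConvexOn ℝ s g) (hg0 : ∀ z ∈ s, 0 ≤ g z)
    (hfs : ∀ᵐ a ∂μ, f a ∈ s) (hfi : Integrable f μ)
    (hgf : AEStronglyMeasurable (fun a => g (f a)) μ) (hm : ∫ a, f a ∂μ ∈ interior s) :
    ENNReal.ofReal (g (∫ a, f a ∂μ)) ≤ ∫⁻ a, ENNReal.ofReal (g (f a)) ∂μ := by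
  have hgf0 : ∀ᵐ a ∂μ, 0 ≤ g (f a) := hfs.mono fun a ha => hg0 _ ha
  by_cases hfin : ∫⁻ a, ENNReal.ofReal (g (f a)) ∂μ = ∞
  · simp [hfin]
  have hgi : Integrable (fun a => g (f a)) μ :=
    ⟨hgf, (hasFiniteIntegral_iff_ofReal hgf0).2 (lt_top_iff_ne_top.2 hfin)⟩
  rw [← ofReal_integral_eq_lintegral_ofReal hgi hgf0]
  exact ENNReal.ofReal_le_ofReal (hg.map_integral_le_of_mem_interior hfs hfi hgi hm)

end ConvexOn

section Product

variable {X Ω : Type*} [MeasurableSpace X] [MeasurableSpace Ω] {μ : Measure X} {P : Measure Ω}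
  {T : Ω → X → X} {π α : X → Ω → ℝ}

theorem lintegral_comp_eq_of_map_eq_withDensity {T : X → X} {p a : X → ℝ} (hT : Measurable T)
    (ha : Measurable a) (hapos : ∀ y, 0 < a y)
    (hmap : μ.map T = μ.withDensity fun y => ENNReal.ofReal (a y))
    (hpa : ∀ᵐ x ∂μ, (p x)⁻¹ = a (T x)) {g : ℝ → ℝ≥0∞} (hg : ContinuousOn g (Ioi 0)) :
    ∫⁻ x, g (p x) ∂μ = ∫⁻ y, ENNReal.ofReal (a y) * g (a y)⁻¹ ∂μ := by
  have hga : AEMeasurable (fun y => g (a y)⁻¹) (μ.map T) :=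
    hg.comp_aemeasurable_of_ae_mem measurableSet_Ioi ha.inv.aemeasurable
      (ae_of_all _ fun y => inv_pos.2 (hapos y))
  calc ∫⁻ x, g (p x) ∂μ = ∫⁻ x, g (a (T x))⁻¹ ∂μ :=
        lintegral_congr_ae <| hpa.mono fun x hx => congrArg g (by rw [← hx, inv_inv])
    _ = ∫⁻ y, g (a y)⁻¹ ∂(μ.map T) := (lintegral_map' hga hT.aemeasurable).symm
    _ = ∫⁻ y, ENNReal.ofReal (a y) * g (a y)⁻¹ ∂μ := by
        rw [hmap]
        exact lintegral_withDensity_eq_lintegral_mul_non_measurable _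
          (ENNReal.measurable_ofReal.comp ha) (ae_of_all _ fun _ => ENNReal.ofReal_lt_top) _

theorem lintegral_ofReal_map_integral_le [IsProbabilityMeasure P] {g : ℝ → ℝ}
    (hg : ConvexOn ℝ (Ioi 0) g) (hg0 : ∀ z ∈ Ioi 0, 0 ≤ g z) (hπ : Measurable (uncurry π))
    (hπpos : ∀ x ω, 0 < π x ω) (hπint : ∀ᵐ x ∂μ, Integrable (π x) P) :
    ∫⁻ x, ENNReal.ofReal (g (∫ ω, π x ω ∂P)) ∂μ
      ≤ ∫⁻ x, ∫⁻ ω, ENNReal.ofReal (g (π x ω)) ∂P ∂μ := by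
  refine lintegral_mono_ae (hπint.mono fun x hx => ?_)
  have hgπ : AEMeasurable (fun ω => g (π x ω)) P :=
    (hg.continuousOn isOpen_Ioi).comp_aemeasurable_of_ae_mem measurableSet_Ioi
      (hπ.comp measurable_prodMk_left).aemeasurable (ae_of_all _ (hπpos x))
  refine hg.ofReal_map_integral_le_lintegral hg0 (ae_of_all _ (hπpos x)) hx
    hgπ.aestronglyMeasurable ?_
  rw [interior_Ioi]
  exact integral_pos_of_forall_pos hx (hπpos x)

variable [SFinite μ] [SFinite P]

theorem integral_le_integral_integral_of_lintegral_le {a : X → ℝ} {f : X → Ω → ℝ}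
    (ha0 : 0 ≤ᵐ[μ] a) (ha : AEStronglyMeasurable a μ) (hf0 : ∀ x ω, 0 ≤ f x ω)
    (hf : Integrable (uncurry f) (μ.prod P))
    (h : ∫⁻ x, ENNReal.ofReal (a x) ∂μ ≤ ∫⁻ x, ∫⁻ ω, ENNReal.ofReal (f x ω) ∂P ∂μ) :
    ∫ x, a x ∂μ ≤ ∫ x, ∫ ω, f x ω ∂P ∂μ := by
  have hf0' : 0 ≤ᵐ[μ.prod P] fun q => f q.1 q.2 := ae_of_all _ fun q => hf0 q.1 q.2
  have hprod : ∫⁻ q, ENNReal.ofReal (f q.1 q.2) ∂(μ.prod P)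
      = ∫⁻ x, ∫⁻ ω, ENNReal.ofReal (f x ω) ∂P ∂μ :=
    lintegral_prod _ hf.1.aemeasurable.ennreal_ofReal
  have hfin := (hasFiniteIntegral_iff_ofReal hf0').1 hf.2
  rw [hprod] at hfin
  rw [integral_integral hf, integral_eq_lintegral_of_nonneg_ae hf0' hf.1, hprod,
    integral_eq_lintegral_of_nonneg_ae ha0 ha]
  exact ENNReal.toReal_mono hfin.ne h

theorem lintegral_lintegral_comp_eq (hT : ∀ ω, Measurable (T ω)) (hπ : Measurable (uncurry π))
    (hα : Measurable (uncurry α)) (hπpos : ∀ x ω, 0 < π x ω) (hαpos : ∀ x ω, 0 < α x ω)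
    (hmap : ∀ᵐ ω ∂P, μ.map (T ω) = μ.withDensity fun y => ENNReal.ofReal (α y ω))
    (hrel : ∀ᵐ ω ∂P, ∀ᵐ x ∂μ, (π x ω)⁻¹ = α (T ω x) ω) {g : ℝ → ℝ≥0∞}
    (hg : ContinuousOn g (Ioi 0)) :
    ∫⁻ x, ∫⁻ ω, g (π x ω) ∂P ∂μ = ∫⁻ x, ∫⁻ ω, ENNReal.ofReal (α x ω) * g (α x ω)⁻¹ ∂P ∂μ := by
  have hgπ : AEMeasurable (uncurry fun x ω => g (π x ω)) (μ.prod P) :=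
    hg.comp_aemeasurable_of_ae_mem measurableSet_Ioi hπ.aemeasurable
      (ae_of_all _ fun q => hπpos q.1 q.2)
  have hgα : AEMeasurable (uncurry fun x ω => ENNReal.ofReal (α x ω) * g (α x ω)⁻¹)
      (μ.prod P) :=
    (ENNReal.measurable_ofReal.comp hα).aemeasurable.mul <|
      hg.comp_aemeasurable_of_ae_mem measurableSet_Ioi hα.inv.aemeasurable
        (ae_of_all _ fun q => inv_pos.2 (hαpos q.1 q.2))
  rw [lintegral_lintegral_swap hgπ, lintegral_lintegral_swap hgα]
  refine lintegral_congr_ae ?_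
  filter_upwards [hmap, hrel] with ω hmapω hrelω
  exact lintegral_comp_eq_of_map_eq_withDensity (hT ω) (hα.comp measurable_prodMk_right)
    (fun y => hαpos y ω) hmapω hrelω hg

theorem integrable_uncurry_of_map_eq_withDensity [IsFiniteMeasure μ] [IsFiniteMeasure P]
    (hT : ∀ ω, Measurable (T ω)) (hπ : Measurable (uncurry π)) (hα : Measurable (uncurry α))
    (hπpos : ∀ x ω, 0 < π x ω) (hαpos : ∀ x ω, 0 < α x ω)
    (hmap : ∀ᵐ ω ∂P, μ.map (T ω) = μ.withDensity fun y => ENNReal.ofReal (α y ω))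
    (hrel : ∀ᵐ ω ∂P, ∀ᵐ x ∂μ, (π x ω)⁻¹ = α (T ω x) ω) :
    Integrable (uncurry π) (μ.prod P) := by
  refine ⟨hπ.aestronglyMeasurable, ?_⟩
  have hone : ∀ x ω, ENNReal.ofReal (α x ω) * ‖(α x ω)⁻¹‖ₑ = 1 := fun x ω => by
    rw [Real.enorm_eq_ofReal (inv_pos.2 (hαpos x ω)).le, ← ENNReal.ofReal_mul (hαpos x ω).le,
      mul_inv_cancel₀ (hαpos x ω).ne', ENNReal.ofReal_one]
  rw [HasFiniteIntegral,
    lintegral_prod (fun q => ‖uncurry π q‖ₑ) (measurable_enorm.comp hπ).aemeasurable]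
  simp only [uncurry_apply_pair]
  rw [lintegral_lintegral_comp_eq hT hπ hα hπpos hαpos hmap hrel continuous_enorm.continuousOn]
  simpa [hone] using ENNReal.mul_lt_top (measure_lt_top P univ) (measure_lt_top μ univ)

end Product

theorem stmt8_general {d : ℕ} {Ω : Type*} [MeasurableSpace Ω] (P : Measure Ω) [IsProbabilityMeasure P]
    (μ0 : Measure (EuclideanSpace ℝ (Fin d)))
    [IsProbabilityMeasure μ0]
    (Finv : Ω → EuclideanSpace ℝ (Fin d) → EuclideanSpace ℝ (Fin d))
    (hFim : ∀ ω, Measurable (Finv ω))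
    (π α : EuclideanSpace ℝ (Fin d) → Ω → ℝ)
    (hπm : Measurable (Function.uncurry π)) (hαm : Measurable (Function.uncurry α))
    (hπpos : ∀ x ω, 0 < π x ω) (hαpos : ∀ x ω, 0 < α x ω)
    (hmapα : ∀ᵐ ω ∂P, μ0.map (Finv ω) = μ0.withDensity fun x => ENNReal.ofReal (α x ω))
    (hrel : ∀ᵐ ω ∂P, ∀ᵐ x ∂μ0, (π x ω)⁻¹ = α (Finv ω x) ω)
    (φ : ℝ → ℝ) (hconv : ConvexOn ℝ (Set.Ioi 0) φ)
    (hφnn : ∀ z ∈ Set.Ioi (0 : ℝ), 0 ≤ φ z)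
    (hint3 : Integrable (fun q : EuclideanSpace ℝ (Fin d) × Ω =>
      α q.1 q.2 * φ ((α q.1 q.2)⁻¹)) (μ0.prod P)) :
    ∫ x, φ (∫ ω, π x ω ∂P) ∂μ0 ≤ ∫ x, (∫ ω, α x ω * φ ((α x ω)⁻¹) ∂P) ∂μ0 := by
  have hφc : ContinuousOn φ (Ioi 0) := hconv.continuousOn isOpen_Ioi
  have hπint : ∀ᵐ x ∂μ0, Integrable (π x) P :=
    (integrable_uncurry_of_map_eq_withDensity hFim hπm hαm hπpos hαpos hmapα hrel).prod_right_ae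
  have hmean : ∀ᵐ x ∂μ0, 0 < ∫ ω, π x ω ∂P :=
    hπint.mono fun x hx => integral_pos_of_forall_pos hx (hπpos x)
  have hφmean : AEMeasurable (fun x => φ (∫ ω, π x ω ∂P)) μ0 :=
    hφc.comp_aemeasurable_of_ae_mem measurableSet_Ioi
      hπm.stronglyMeasurable.integral_prod_right.measurable.aemeasurable hmean
  refine integral_le_integral_integral_of_lintegral_le (hmean.mono fun x hx => hφnn _ hx)
    hφmean.aestronglyMeasurable
    (fun x ω => mul_nonneg (hαpos x ω).le (hφnn _ (inv_pos.2 (hαpos x ω)))) hint3 ?_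
  calc ∫⁻ x, ENNReal.ofReal (φ (∫ ω, π x ω ∂P)) ∂μ0
      ≤ ∫⁻ x, ∫⁻ ω, ENNReal.ofReal (φ (π x ω)) ∂P ∂μ0 :=
        lintegral_ofReal_map_integral_le hconv hφnn hπm hπpos hπint
    _ = ∫⁻ x, ∫⁻ ω, ENNReal.ofReal (α x ω) * ENNReal.ofReal (φ (α x ω)⁻¹) ∂P ∂μ0 :=
        lintegral_lintegral_comp_eq hFim hπm hαm hπpos hαpos hmapα hrel
          (ENNReal.continuous_ofReal.comp_continuousOn hφc)
    _ = ∫⁻ x, ∫⁻ ω, ENNReal.ofReal (α x ω * φ (α x ω)⁻¹) ∂P ∂μ0 := by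
        simp only [ENNReal.ofReal_mul (hαpos _ _).le]

/-- Bound on the φ-divergence of the averaged pushforward measure μ_t (with density
ρ_{t0}(x)E[π_{t,t0}(x,ω)]) from μ_{t0} in terms of the average of φ_‡(α_{t,t0}) where
φ_‡(z) = zφ(1/z) and α is the pullback density. -/
theorem stmt8 {d : ℕ} {Ω : Type*} [MeasurableSpace Ω] (P : Measure Ω) [IsProbabilityMeasure P]
    (ρ0 : EuclideanSpace ℝ (Fin d) → ℝ) (hρ0 : ∀ x, 0 < ρ0 x) (hρ0m : Measurable ρ0)
    (μ0 : Measure (EuclideanSpace ℝ (Fin d)))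
    (hμ0 : μ0 = volume.withDensity fun x => ENNReal.ofReal (ρ0 x))
    [IsProbabilityMeasure μ0]
    (F Finv : Ω → EuclideanSpace ℝ (Fin d) → EuclideanSpace ℝ (Fin d))
    (hFm : ∀ ω, Measurable (F ω)) (hFim : ∀ ω, Measurable (Finv ω))
    (hli : ∀ ω, Function.LeftInverse (Finv ω) (F ω))
    (hri : ∀ ω, Function.RightInverse (Finv ω) (F ω))
    (π α : EuclideanSpace ℝ (Fin d) → Ω → ℝ)
    (hπm : Measurable (Function.uncurry π)) (hαm : Measurable (Function.uncurry α))
    (hπpos : ∀ x ω, 0 < π x ω) (hαpos : ∀ x ω, 0 < α x ω)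
    (hmapπ : ∀ᵐ ω ∂P, μ0.map (F ω) = μ0.withDensity fun x => ENNReal.ofReal (π x ω))
    (hmapα : ∀ᵐ ω ∂P, μ0.map (Finv ω) = μ0.withDensity fun x => ENNReal.ofReal (α x ω))
    (hrel : ∀ᵐ ω ∂P, ∀ᵐ x ∂μ0, (π x ω)⁻¹ = α (Finv ω x) ω)
    (φ : ℝ → ℝ) (hconv : ConvexOn ℝ (Set.Ioi 0) φ) (hφ1 : φ 1 = 0)
    (hφnn : ∀ z ∈ Set.Ioi (0 : ℝ), 0 ≤ φ z)
    (hint1 : Integrable (fun x => φ (∫ ω, π x ω ∂P)) μ0)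
    (hint2 : Integrable (fun q : EuclideanSpace ℝ (Fin d) × Ω =>
      π q.1 q.2 * φ ((π q.1 q.2)⁻¹)) (μ0.prod P))
    (hint3 : Integrable (fun q : EuclideanSpace ℝ (Fin d) × Ω =>
      α q.1 q.2 * φ ((α q.1 q.2)⁻¹)) (μ0.prod P)) :
    ∫ x, φ (∫ ω, π x ω ∂P) ∂μ0 ≤ ∫ x, (∫ ω, α x ω * φ ((α x ω)⁻¹) ∂P) ∂μ0 :=
  stmt8_general P μ0 Finv hFim π α hπm hαm hπpos hαpos hmapα hrel φ hconv hφnn hint3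
end
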